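/- arXiv:2212.13650 — 3 statements merged into one kernel-verified Lean document; each statement's English description precedes it below -/
import Mathlib

section
/- Let T > 0 and let R, Z : [0,T] → ℝ be continuous functions such that ∫₀ᵗ R(s) Z(t−s) ds = 0 for every t ∈ [0,T]. If R(0) ≠ 0, then Z(s) = 0 for all s ∈ [0,T]. -/
/-!
Write `L h (λ) = ∫₀ᵀ e^{-λs} h(s) ds`. The product `L R · L Z` is the Laplace transform of the
convolution of `R, Z` cut off to `[0, T]`; that convolution vanishes on `[0, T]`, so the product is
`O(e^{-λT})`. Since `λ · L R (λ) → R(0) ≠ 0`, this gives `L Z (λ) = O(λ e^{-λT})` and, for the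
primitive `W` of `Z`, `L W (λ) = O(e^{-λT})`. Then `Ψ(z) = ∫₀ᵀ e^{zu} W(T - u) du` is entire of
exponential type and bounded on `Re z ≤ 0` and on the positive real axis, so by Phragmén–Lindelöf
and Liouville it is constant, and it is `0` because `Ψ(-λ) → 0`. Hence the Fourier transform of
`W` on `[0, T]` vanishes, so `W = 0` there and `Z = W' = 0`.
-/

open MeasureTheory Set Filter Topology Asymptotics
open scoped FourierTransform

noncomputable def truncatedLaplace (T : ℝ) (f : ℝ → ℝ) (l : ℝ) : ℝ :=
  ∫ s in (0 : ℝ)..T, Real.exp (-(l * s)) * f s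

theorem truncatedLaplace_eq_integral_indicator {T : ℝ} (hT : 0 ≤ T) (f : ℝ → ℝ) (l : ℝ) :
    truncatedLaplace T f l =
      ∫ s, (Icc 0 T).indicator (fun s => Real.exp (-(l * s)) * f s) s := by
  rw [truncatedLaplace, intervalIntegral.integral_of_le hT, integral_indicator measurableSet_Icc,
    integral_Icc_eq_integral_Ioc]

theorem tendsto_mul_truncatedLaplace {T : ℝ} (hT : 0 < T) {f : ℝ → ℝ} (hf : Continuous f) :
    Tendsto (fun l => l * truncatedLaplace T f l) atTop (𝓝 (f 0)) := by
  set φ : ℝ → ℝ := (Ici 0).indicator fun x => Real.exp (-x)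
  -- `φ` vanishes on `x < 0`, so cutting `f` off to `[-1, T]` rather than `[0, T]` changes no
  -- integral below but makes `g` continuous at `0`
  set g : ℝ → ℝ := (Icc (-1) T).indicator f
  have hφ : ∀ x, 0 ≤ φ x := fun x => indicator_nonneg (fun x _ => (Real.exp_pos _).le) x
  have hφ_int : ∫ x, φ x = 1 := by
    rw [integral_indicator measurableSet_Ici, integral_Ici_eq_integral_Ioi,
      integral_exp_neg_Ioi_zero]
  have hφ_decay : Tendsto (fun x => ‖x‖ ^ Module.finrank ℝ ℝ * φ x) (Bornology.cobounded ℝ)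
      (𝓝 0) := by
    rw [IsOrderBornology.cobounded_eq, Module.finrank_self, tendsto_sup]
    constructor
    · refine tendsto_const_nhds.congr' ?_
      filter_upwards [eventually_lt_atBot 0] with x hx
      simp [φ, hx.not_ge]
    · refine (Real.tendsto_pow_mul_exp_neg_atTop_nhds_zero 1).congr' ?_
      filter_upwards [eventually_ge_atTop 0] with x hx
      simp [φ, hx, abs_of_nonneg hx]
  have hg_int : Integrable g := hf.integrableOn_Icc.integrable_indicator measurableSet_Icc
  have hg_nhds : Icc (-1) T ∈ 𝓝 (0 : ℝ) := Icc_mem_nhds (by norm_num) hT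
  have hg_cont : ContinuousAt g 0 :=
    hf.continuousAt.congr (eqOn_indicator.eventuallyEq_of_mem hg_nhds).symm
  have hpeak := tendsto_integral_comp_smul_smul_of_integrable (μ := volume) hφ hφ_int hφ_decay
    hg_int hg_cont
  rw [show g 0 = f 0 from indicator_of_mem (mem_of_mem_nhds hg_nhds) f] at hpeak
  refine hpeak.congr' ?_
  filter_upwards [eventually_gt_atTop 0] with c hc
  rw [truncatedLaplace_eq_integral_indicator hT.le, ← integral_const_mul]
  congr 1 with x
  simp only [Module.finrank_self, pow_one, smul_eq_mul, φ, g, indicator, mem_Ici, mem_Icc,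
    mul_nonneg_iff_of_pos_left hc]
  split_ifs <;> first | ring1 | (exfalso; grind)

theorem tendsto_truncatedLaplace_atTop {T : ℝ} (hT : 0 < T) {f : ℝ → ℝ} (hf : Continuous f) :
    Tendsto (truncatedLaplace T f) atTop (𝓝 0) := by
  have := tendsto_inv_atTop_zero.mul (tendsto_mul_truncatedLaplace hT hf)
  rw [zero_mul] at this
  refine this.congr' ?_
  filter_upwards [eventually_ne_atTop 0] with l hl
  field_simp

theorem truncatedLaplace_mul_eq_integral {T : ℝ} (hT : 0 ≤ T) {f g : ℝ → ℝ}
    (hf : ContinuousOn f (Icc 0 T)) (hg : ContinuousOn g (Icc 0 T)) (l : ℝ) :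
    truncatedLaplace T f l * truncatedLaplace T g l =
      ∫ τ, Real.exp (-(l * τ)) * ∫ s in Icc 0 T ∩ Icc (τ - T) τ, f s * g (τ - s) := by
  set F := (Icc 0 T).indicator fun s => Real.exp (-(l * s)) * f s
  set G := (Icc 0 T).indicator fun s => Real.exp (-(l * s)) * g s
  have hF : Integrable F := ((Real.continuous_exp.comp (by fun_prop)).continuousOn.mul
    hf).integrableOn_Icc.integrable_indicator measurableSet_Icc
  have hG : Integrable G := ((Real.continuous_exp.comp (by fun_prop)).continuousOn.mul
    hg).integrableOn_Icc.integrable_indicator measurableSet_Icc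
  rw [truncatedLaplace_eq_integral_indicator hT, truncatedLaplace_eq_integral_indicator hT,
    show (∫ s, F s) * ∫ s, G s =
        ∫ τ, convolution F G (ContinuousLinearMap.mul ℝ ℝ) volume τ from
      (integral_convolution (ContinuousLinearMap.mul ℝ ℝ) hF hG).symm]
  congr 1 with τ
  rw [convolution_def, ← integral_const_mul, ← integral_indicator (measurableSet_Icc.inter
    measurableSet_Icc)]
  congr 1 with s
  by_cases hs : s ∈ Icc 0 T ∧ τ - s ∈ Icc 0 T
  · have hs' : s ∈ Icc 0 T ∩ Icc (τ - T) τ := ⟨hs.1, by grind⟩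
    simp only [F, G, ContinuousLinearMap.mul_apply']
    rw [indicator_of_mem hs', indicator_of_mem hs.1, indicator_of_mem hs.2,
      show -(l * τ) = -(l * s) + -(l * (τ - s)) by ring, Real.exp_add]
    ring
  · have hs' : s ∉ Icc 0 T ∩ Icc (τ - T) τ := fun h => hs ⟨h.1, by grind⟩
    rw [indicator_of_notMem hs']
    rcases not_and_or.1 hs with h | h <;> simp [F, G, h]

theorem abs_truncatedLaplace_mul_le {T M N l : ℝ} (hT : 0 ≤ T) {f g : ℝ → ℝ}
    (hf : ContinuousOn f (Icc 0 T)) (hg : ContinuousOn g (Icc 0 T))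
    (hfM : ∀ s ∈ Icc 0 T, |f s| ≤ M) (hgN : ∀ s ∈ Icc 0 T, |g s| ≤ N)
    (hconv : ∀ t ∈ Icc 0 T, ∫ s in (0 : ℝ)..t, f s * g (t - s) = 0) (hl : 0 ≤ l) :
    |truncatedLaplace T f l * truncatedLaplace T g l| ≤
      M * N * T ^ 2 * Real.exp (-(l * T)) := by
  set c : ℝ → ℝ := fun τ => ∫ s in Icc 0 T ∩ Icc (τ - T) τ, f s * g (τ - s)
  have hc_Icc : ∀ τ ∈ Icc 0 T, c τ = 0 := by
    intro τ hτ
    have hS : Icc 0 T ∩ Icc (τ - T) τ = Icc 0 τ := by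
      ext s; simp only [mem_inter_iff, mem_Icc]; constructor <;> intro h <;> grind
    simp only [c, hS]
    rw [integral_Icc_eq_integral_Ioc, ← intervalIntegral.integral_of_le hτ.1, hconv τ hτ]
  have hc_out : ∀ τ ∉ Ioc T (2 * T), Real.exp (-(l * τ)) * c τ = 0 := by
    intro τ hτ
    by_cases hτ' : τ ∈ Icc 0 T
    · rw [hc_Icc τ hτ', mul_zero]
    have hS : Icc 0 T ∩ Icc (τ - T) τ = ∅ := by
      ext s; simp only [mem_inter_iff, mem_Icc, mem_empty_iff_false, iff_false]
      simp only [mem_Ioc, mem_Icc] at hτ hτ'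
      grind
    simp [c, hS]
  have hM : 0 ≤ M := (abs_nonneg _).trans (hfM 0 ⟨le_rfl, hT⟩)
  have hc_le : ∀ τ ∈ Ioc T (2 * T), ‖Real.exp (-(l * τ)) * c τ‖ ≤
      Real.exp (-(l * T)) * (M * N * T) := by
    intro τ hτ
    have hc : ‖c τ‖ ≤ M * N * volume.real (Icc 0 T ∩ Icc (τ - T) τ) :=
      norm_setIntegral_le_of_norm_le_const
        ((measure_mono inter_subset_left).trans_lt measure_Icc_lt_top) fun s hs => by
          rw [norm_mul, Real.norm_eq_abs, Real.norm_eq_abs]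
          exact mul_le_mul (hfM s hs.1) (hgN _ (by grind)) (abs_nonneg _) hM
    have hvol : volume.real (Icc 0 T ∩ Icc (τ - T) τ) ≤ T :=
      (measureReal_mono inter_subset_left measure_Icc_lt_top.ne).trans_eq
        ((Real.volume_real_Icc_of_le hT).trans (sub_zero T))
    have hN : 0 ≤ N := (abs_nonneg _).trans (hgN 0 ⟨le_rfl, hT⟩)
    rw [norm_mul, Real.norm_of_nonneg (Real.exp_pos _).le]
    exact mul_le_mul (Real.exp_le_exp.2 (by nlinarith [hτ.1])) (hc.trans (by gcongr))
      (norm_nonneg _) (Real.exp_pos _).le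
  rw [truncatedLaplace_mul_eq_integral hT hf hg,
    ← setIntegral_eq_integral_of_forall_compl_eq_zero hc_out, ← Real.norm_eq_abs]
  refine (norm_setIntegral_le_of_norm_le_const measure_Ioc_lt_top hc_le).trans_eq ?_
  rw [Real.volume_real_Ioc_of_le (by linarith)]
  ring

theorem mul_truncatedLaplace_primitive (T : ℝ) {g : ℝ → ℝ} (hg : Continuous g) (l : ℝ) :
    l * truncatedLaplace T (fun t => ∫ u in (0 : ℝ)..t, g u) l =
      truncatedLaplace T g l - Real.exp (-(l * T)) * ∫ u in (0 : ℝ)..T, g u := by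
  have hexp : ∀ s, HasDerivAt (fun s => Real.exp (-(l * s))) (-l * Real.exp (-(l * s))) s :=
    fun s => by simpa [mul_comm] using ((hasDerivAt_id s).const_mul l).neg.exp
  have hparts := intervalIntegral.integral_mul_deriv_eq_deriv_mul (a := 0) (b := T)
    (fun s _ => hexp s) (fun s _ => hg.integral_hasStrictDerivAt 0 s |>.hasDerivAt)
    ((by fun_prop : Continuous fun s => -l * Real.exp (-(l * s))).intervalIntegrable _ _)
    (hg.intervalIntegrable _ _)
  simp only [intervalIntegral.integral_same, mul_zero, sub_zero, neg_mul,
    intervalIntegral.integral_neg, mul_assoc, intervalIntegral.integral_const_mul] at hparts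
  rw [truncatedLaplace, truncatedLaplace, hparts]
  ring

theorem eqOn_zero_of_primitive_eqOn_zero {T : ℝ} (hT : 0 < T) {g : ℝ → ℝ} (hg : Continuous g)
    (h : EqOn (fun t => ∫ u in (0 : ℝ)..t, g u) 0 (Icc 0 T)) : EqOn g 0 (Icc 0 T) := fun t ht =>
  (uniqueDiffOn_Icc hT t ht).eq_deriv _
    ((hg.integral_hasStrictDerivAt 0 t).hasDerivAt.hasDerivWithinAt)
    ((hasDerivWithinAt_const t _ 0).congr h (h ht))

theorem differentiable_integral_cexp_mul (T : ℝ) {φ : ℝ → ℂ} (hφ : Continuous φ) :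
    Differentiable ℂ fun z : ℂ => ∫ u in (0 : ℝ)..T, Complex.exp (z * u) * φ u := by
  intro z₀
  have hderiv : ∀ (z : ℂ) (u : ℝ), HasDerivAt (fun z : ℂ => Complex.exp (z * u) * φ u)
      (u * Complex.exp (z * u) * φ u) z := fun z u => by
    simpa [mul_comm] using ((hasDerivAt_mul_const (u : ℂ)).cexp).mul_const (φ u)
  have hbound : ∀ u : ℝ, ∀ z ∈ Metric.ball z₀ 1,
      ‖(u : ℂ) * Complex.exp (z * u) * φ u‖ ≤ |u| * Real.exp ((‖z₀‖ + 1) * |u|) * ‖φ u‖ := by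
    intro u z hz
    have hz : ‖z‖ ≤ ‖z₀‖ + 1 := by
      have := norm_le_norm_add_norm_sub' z z₀
      rw [Metric.mem_ball, dist_eq_norm] at hz
      linarith
    rw [norm_mul, norm_mul, Complex.norm_exp, Complex.norm_real, Real.norm_eq_abs]
    gcongr
    calc (z * u).re = z.re * u := by simp
      _ ≤ |z.re| * |u| := by rw [← abs_mul]; exact le_abs_self _
      _ ≤ (‖z₀‖ + 1) * |u| := by gcongr; exact (Complex.abs_re_le_norm z).trans hz
  exact (intervalIntegral.hasDerivAt_integral_of_dominated_loc_of_deriv_le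
    (F := fun z (u : ℝ) => Complex.exp (z * u) * φ u)
    (F' := fun z (u : ℝ) => (u : ℂ) * Complex.exp (z * u) * φ u) (a := 0) (b := T)
    (Metric.ball_mem_nhds z₀ one_pos)
    (Eventually.of_forall fun z => (by fun_prop : Continuous _).aestronglyMeasurable)
    ((by fun_prop : Continuous _).intervalIntegrable _ _)
    (by fun_prop : Continuous _).aestronglyMeasurable
    (Eventually.of_forall fun u _ => hbound u)
    ((by fun_prop : Continuous _).intervalIntegrable _ _)
    (Eventually.of_forall fun u _ z _ => hderiv z u)).2.differentiableAt

theorem norm_integral_cexp_mul_le {T M : ℝ} (hT : 0 ≤ T) {φ : ℝ → ℂ}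
    (hM : ∀ u ∈ Icc 0 T, ‖φ u‖ ≤ M) (z : ℂ) :
    ‖∫ u in (0 : ℝ)..T, Complex.exp (z * u) * φ u‖ ≤ M * T * Real.exp (T * max z.re 0) := by
  have hpt : ∀ u ∈ uIoc (0 : ℝ) T,
      ‖Complex.exp (z * u) * φ u‖ ≤ Real.exp (T * max z.re 0) * M := by
    intro u hu
    rw [uIoc_of_le hT] at hu
    rw [norm_mul, Complex.norm_exp, Complex.re_mul_ofReal]
    have hexp : z.re * u ≤ T * max z.re 0 :=
      calc z.re * u ≤ max z.re 0 * u := mul_le_mul_of_nonneg_right (le_max_left _ _) hu.1.le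
        _ ≤ max z.re 0 * T := mul_le_mul_of_nonneg_left hu.2 (le_max_right _ _)
        _ = T * max z.re 0 := mul_comm _ _
    exact mul_le_mul (Real.exp_le_exp.2 hexp) (hM u ⟨hu.1.le, hu.2⟩) (norm_nonneg _)
      (Real.exp_pos _).le
  refine (intervalIntegral.norm_integral_le_of_norm_le_const hpt).trans_eq ?_
  rw [sub_zero, abs_of_nonneg hT]
  ring

theorem Differentiable.apply_eq_apply_of_bounded_re_nonpos {Ψ : ℂ → ℂ}
    (hd : Differentiable ℂ Ψ) {B C : ℝ} (hleft : ∀ z : ℂ, z.re ≤ 0 → ‖Ψ z‖ ≤ C)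
    (hre : IsBoundedUnder (· ≤ ·) atTop fun x : ℝ => ‖Ψ x‖)
    (hexp : Ψ =O[Bornology.cobounded ℂ] fun z => Real.exp (B * ‖z‖)) (z w : ℂ) : Ψ z = Ψ w := by
  have hbound : ∀ z, ‖Ψ z‖ ≤ C := by
    intro z
    rcases le_or_gt z.re 0 with h | h
    · exact hleft z h
    · exact PhragmenLindelof.right_half_plane_of_bounded_on_real hd.diffContOnCl
        ⟨1, one_lt_two, B, by simpa using hexp.mono inf_le_left⟩ hre
        (fun x => hleft _ (by simp)) h.le
  exact hd.apply_eq_apply_of_bounded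
    (isBounded_iff_forall_norm_le.2 ⟨C, by rintro _ ⟨z, rfl⟩; exact hbound z⟩) z w

theorem eqOn_zero_of_integral_cexp_mul_eq_zero {T : ℝ} (hT : 0 < T) {φ : ℝ → ℂ}
    (hφ : Continuous φ)
    (h : ∀ ξ : ℝ, ∫ u in (0 : ℝ)..T, Complex.exp (ξ * Complex.I * u) * φ u = 0) :
    EqOn φ 0 (Icc 0 T) := by
  set F := (Ioc 0 T).indicator φ
  have hF : Integrable F := hφ.integrableOn_Ioc.integrable_indicator measurableSet_Ioc
  have h𝓕F : 𝓕 F = 0 := by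
    ext w
    rw [Real.fourier_real_eq_integral_exp_smul, Pi.zero_apply, ← h (-2 * Real.pi * w),
      intervalIntegral.integral_of_le hT.le, ← integral_indicator measurableSet_Ioc]
    congr 1 with v
    simp only [F, smul_eq_mul, indicator_mul_right]
    congr 2
    push_cast
    ring_nf
  have hIoo : EqOn φ 0 (Ioo 0 T) := by
    intro v hv
    have hFv : ContinuousAt F v := hφ.continuousAt.congr
      (eqOn_indicator.eventuallyEq_of_mem (Ioc_mem_nhds hv.1 hv.2)).symm
    have := hF.fourierInv_fourier_eq (by rw [h𝓕F]; exact integrable_zero _ _ _) hFv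
    rw [h𝓕F, show F v = φ v from indicator_of_mem (Ioo_subset_Ioc_self hv) φ] at this
    rw [← this, Pi.zero_apply, Real.fourierInv_eq]
    simp
  exact hIoo.of_subset_closure hφ.continuousOn continuousOn_const Ioo_subset_Icc_self
    (closure_Ioo hT.ne).ge

theorem integral_cexp_mul_comp_sub (T : ℝ) (ψ : ℝ → ℝ) (x : ℝ) :
    ∫ u in (0 : ℝ)..T, Complex.exp (x * u) * (ψ (T - u) : ℂ) =
      ↑(Real.exp (x * T) * truncatedLaplace T ψ x) := by
  have hsub := intervalIntegral.integral_comp_sub_left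
    (fun v : ℝ => Complex.exp ↑(x * (T - v)) * (ψ v : ℂ)) T (a := 0) (b := T)
  simp only [sub_sub_cancel, sub_self, sub_zero] at hsub
  rw [truncatedLaplace, ← intervalIntegral.integral_const_mul,
    intervalIntegral.integral_ofReal.symm]
  calc ∫ u in (0 : ℝ)..T, Complex.exp (x * u) * (ψ (T - u) : ℂ)
      = ∫ v in (0 : ℝ)..T, Complex.exp ↑(x * (T - v)) * (ψ v : ℂ) := by
        rw [← hsub]; push_cast; rfl
    _ = _ := intervalIntegral.integral_congr fun v _ => by
        push_cast
        rw [mul_sub, sub_eq_add_neg, Complex.exp_add, ← neg_mul]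
        ring

theorem integral_cexp_mul_comp_sub_eq_of_isBigO {T : ℝ} (hT : 0 < T) {ψ : ℝ → ℝ}
    (hψ : Continuous ψ) (h : truncatedLaplace T ψ =O[atTop] fun l => Real.exp (-(l * T)))
    (z w : ℂ) :
    ∫ u in (0 : ℝ)..T, Complex.exp (z * u) * (ψ (T - u) : ℂ) =
      ∫ u in (0 : ℝ)..T, Complex.exp (w * u) * (ψ (T - u) : ℂ) := by
  set Ψ : ℂ → ℂ := fun z => ∫ u in (0 : ℝ)..T, Complex.exp (z * u) * (ψ (T - u) : ℂ)
  obtain ⟨M, hM⟩ := isCompact_Icc.exists_bound_of_continuousOn (s := Icc 0 T)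
    (f := fun u => (ψ (T - u) : ℂ)) (by fun_prop)
  have hM0 : 0 ≤ M := (norm_nonneg _).trans (hM 0 ⟨le_rfl, hT.le⟩)
  have hΨ_le : ∀ z, ‖Ψ z‖ ≤ M * T * Real.exp (T * max z.re 0) :=
    norm_integral_cexp_mul_le hT.le hM
  refine (differentiable_integral_cexp_mul T (by fun_prop)).apply_eq_apply_of_bounded_re_nonpos
    (B := T) (C := M * T) (fun z hz => ?_) ?_ ?_ z w
  · simpa [max_eq_right hz] using hΨ_le z
  · obtain ⟨c, hc⟩ := isBigO_iff.1 h
    refine isBoundedUnder_of_eventually_le (a := c) (hc.mono fun x hx => ?_)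
    rw [integral_cexp_mul_comp_sub, Complex.norm_real, norm_mul,
      Real.norm_of_nonneg (Real.exp_pos _).le]
    rw [Real.norm_of_nonneg (Real.exp_pos _).le] at hx
    calc Real.exp (x * T) * ‖truncatedLaplace T ψ x‖
        ≤ Real.exp (x * T) * (c * Real.exp (-(x * T))) := by gcongr
      _ = c := by rw [mul_left_comm, ← Real.exp_add, add_neg_cancel, Real.exp_zero, mul_one]
  · refine IsBigO.of_bound (M * T) (Eventually.of_forall fun z => ?_)
    rw [Real.norm_of_nonneg (Real.exp_pos _).le]
    refine (hΨ_le z).trans ?_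
    gcongr
    exact max_le (Complex.re_le_norm z) (norm_nonneg z)

theorem eqOn_zero_of_isBigO_truncatedLaplace {T : ℝ} (hT : 0 < T) {ψ : ℝ → ℝ}
    (hψ : Continuous ψ) (h : truncatedLaplace T ψ =O[atTop] fun l => Real.exp (-(l * T))) :
    EqOn ψ 0 (Icc 0 T) := by
  set φ : ℝ → ℝ := fun u => ψ (T - u)
  have hφ : Continuous φ := hψ.comp (continuous_sub_left T)
  have hzero : ∀ z : ℂ, ∫ u in (0 : ℝ)..T, Complex.exp (z * u) * (φ u : ℂ) = 0 := by
    intro z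
    have hlim : Tendsto (fun l : ℝ => ∫ u in (0 : ℝ)..T, Complex.exp (↑(-l) * u) * (φ u : ℂ))
        atTop (𝓝 0) := by
      refine (tendsto_truncatedLaplace_atTop hT hφ).ofReal.congr fun l => ?_
      rw [truncatedLaplace, intervalIntegral.integral_ofReal.symm]
      exact intervalIntegral.integral_congr fun u _ => by push_cast; ring_nf
    simp_rw [φ, integral_cexp_mul_comp_sub_eq_of_isBigO hT hψ h _ z] at hlim
    exact tendsto_nhds_unique tendsto_const_nhds hlim
  intro u hu
  have hu' : T - u ∈ Icc 0 T := ⟨sub_nonneg.2 hu.2, by linarith [hu.1]⟩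
  simpa [φ] using eqOn_zero_of_integral_cexp_mul_eq_zero hT (by fun_prop)
    (fun ξ => hzero (ξ * Complex.I)) hu'

theorem isBigO_truncatedLaplace_of_convolution_eq_zero {T : ℝ} (hT : 0 < T) {f g : ℝ → ℝ}
    (hf : Continuous f) (hg : Continuous g)
    (hconv : ∀ t ∈ Icc 0 T, ∫ s in (0 : ℝ)..t, f s * g (t - s) = 0) (hf0 : f 0 ≠ 0) :
    truncatedLaplace T g =O[atTop] fun l => l * Real.exp (-(l * T)) := by
  obtain ⟨M, hM⟩ := isCompact_Icc.exists_bound_of_continuousOn hf.continuousOn (s := Icc 0 T)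
  obtain ⟨N, hN⟩ := isCompact_Icc.exists_bound_of_continuousOn hg.continuousOn (s := Icc 0 T)
  have hprod : (fun l => truncatedLaplace T f l * truncatedLaplace T g l) =O[atTop]
      fun l => Real.exp (-(l * T)) := by
    refine IsBigO.of_bound (M * N * T ^ 2) ((eventually_ge_atTop 0).mono fun l hl => ?_)
    rw [Real.norm_eq_abs, Real.norm_of_nonneg (Real.exp_pos _).le]
    exact abs_truncatedLaplace_mul_le hT.le hf.continuousOn hg.continuousOn hM hN hconv hl
  have hlim := tendsto_mul_truncatedLaplace hT hf
  have hinv : (fun l => (truncatedLaplace T f l)⁻¹) =O[atTop] fun l => l := by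
    refine ((isBigO_refl (fun l : ℝ => l) atTop).mul ((hlim.inv₀ hf0).isBigO_one ℝ)).congr'
      ?_ (by simp)
    filter_upwards [eventually_ne_atTop 0] with l hl
    rw [mul_inv, mul_inv_cancel_left₀ hl]
  have hne : ∀ᶠ l in atTop, truncatedLaplace T f l ≠ 0 := by
    filter_upwards [hlim.eventually_ne hf0] with l hl
    exact right_ne_zero_of_mul hl
  refine (hinv.mul hprod).congr' ?_ EventuallyEq.rfl
  filter_upwards [hne] with l hl
  exact inv_mul_cancel_left₀ hl _

theorem eqOn_zero_of_convolution_eq_zero {T : ℝ} (hT : 0 < T) {f g : ℝ → ℝ}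
    (hf : Continuous f) (hg : Continuous g)
    (hconv : ∀ t ∈ Icc 0 T, ∫ s in (0 : ℝ)..t, f s * g (t - s) = 0) (hf0 : f 0 ≠ 0) :
    EqOn g 0 (Icc 0 T) := by
  set G : ℝ → ℝ := fun t => ∫ u in (0 : ℝ)..t, g u
  have hLg := isBigO_truncatedLaplace_of_convolution_eq_zero hT hf hg hconv hf0
  have hLG : truncatedLaplace T G =O[atTop] fun l => Real.exp (-(l * T)) := by
    have h₁ : (fun l => l⁻¹ * truncatedLaplace T g l) =O[atTop] fun l => Real.exp (-(l * T)) :=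
      ((isBigO_refl (fun l : ℝ => l⁻¹) atTop).mul hLg).congr' EventuallyEq.rfl
        ((eventually_ne_atTop 0).mono fun l hl => inv_mul_cancel_left₀ hl _)
    have h₂ : (fun l => l⁻¹ * (Real.exp (-(l * T)) * G T)) =O[atTop]
        fun l => Real.exp (-(l * T)) :=
      ((tendsto_inv_atTop_zero.isBigO_one ℝ).mul
        ((isBigO_refl _ atTop).mul (isBigO_const_const (G T) one_ne_zero atTop))).congr_right
        (by simp)
    refine (h₁.sub h₂).congr' ?_ EventuallyEq.rfl
    filter_upwards [eventually_ne_atTop 0] with l hl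
    rw [← mul_sub, ← mul_truncatedLaplace_primitive T hg, inv_mul_cancel_left₀ hl]
  exact eqOn_zero_of_primitive_eqOn_zero hT hg
    (eqOn_zero_of_isBigO_truncatedLaplace hT
      (intervalIntegral.continuous_primitive hg.intervalIntegrable 0) hLG)

/-- If `R, Z` are continuous on `[0,T]`, their convolution vanishes identically on `[0,T]`,
and `R 0 ≠ 0`, then `Z = 0` on `[0,T]`. -/
theorem stmt_5 (T : ℝ) (hT : 0 < T) (R Z : ℝ → ℝ)
    (hR : ContinuousOn R (Set.Icc 0 T)) (hZ : ContinuousOn Z (Set.Icc 0 T))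
    (hconv : ∀ t ∈ Set.Icc (0 : ℝ) T, (∫ s in (0 : ℝ)..t, R s * Z (t - s)) = 0)
    (hR0 : R 0 ≠ 0) :
    ∀ s ∈ Set.Icc (0 : ℝ) T, Z s = 0 := by
  set f := IccExtend hT.le ((Icc 0 T).domRestrict R)
  set g := IccExtend hT.le ((Icc 0 T).domRestrict Z)
  have hfR : EqOn f R (Icc 0 T) := fun x hx => IccExtend_of_mem hT.le _ hx
  have hgZ : EqOn g Z (Icc 0 T) := fun x hx => IccExtend_of_mem hT.le _ hx
  have hconv' : ∀ t ∈ Icc 0 T, ∫ s in (0 : ℝ)..t, f s * g (t - s) = 0 := by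
    intro t ht
    refine (intervalIntegral.integral_congr fun s hs => ?_).trans (hconv t ht)
    rw [uIcc_of_le ht.1] at hs
    simp only [hfR ⟨hs.1, hs.2.trans ht.2⟩, hgZ ⟨sub_nonneg.2 hs.2, by linarith [hs.1, ht.2]⟩]
  have hg0 := eqOn_zero_of_convolution_eq_zero hT hR.domRestrict.Icc_extend'
    hZ.domRestrict.Icc_extend' hconv' ((hfR ⟨le_rfl, hT.le⟩).trans_ne hR0)
  intro s hs
  rw [← hgZ hs]
  exact hg0 hs
end

section
/- Let E be a complex Banach space, A : E → E a continuous linear map, T > 0, R : [0,T] → ℝ continuously differentiable, f ∈ E, and v : [0,T] → E continuously differentiable with i v′(t) + A v(t) = 0 for all t ∈ [0,T] and v(0) = −i f. Then the function y(t) := ∫₀ᵗ R(t−τ) v(τ) dτ satisfies y(0) = 0 and i y′(t) + A y(t) = R(t) f for all t ∈ (0,T). -/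
/-!
Since `A` is bounded, the equation `v' = i A v` forces `v τ = exp (τ • iA) (v 0)`, because
`exp (-τ • iA) (v τ)` has zero derivative. Writing
`S u = exp (u • iA)`, the substitution `σ = t - τ` and the group law `S (t - σ) = S t * S (-σ)`
turn the convolution into `y t = S t (∫₀ᵗ R σ • S (-σ) (v 0) dσ)`. The product rule and the
fundamental theorem of calculus then give `y' t = iA (y t) + R t • v 0`, so that
`i y' t + A (y t) = i R t • v 0 = R t • f`.
-/

open MeasureTheory NormedSpace Set Filter

section ExpSmul

variable {E : Type*} [NormedAddCommGroup E] [NormedSpace ℝ E] [CompleteSpace E]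

theorem exp_smul_mul_exp_smul (B : E →L[ℝ] E) (s u : ℝ) :
    exp (s • B) * exp (u • B) = exp ((s + u) • B) := by
  -- `exp_add_of_commute` is stated for normed `ℚ`-algebras
  let +nondep : NormedAlgebra ℚ (E →L[ℝ] E) := .restrictScalars ℚ ℝ _
  rw [← exp_add_of_commute ((Commute.refl B).smul_left s |>.smul_right u), add_smul]

theorem exp_smul_apply_exp_neg_smul_apply (B : E →L[ℝ] E) (s : ℝ) (x : E) :
    exp (s • B) (exp (-s • B) x) = x := by
  rw [← mul_apply_eq_comp, exp_smul_mul_exp_smul, add_neg_cancel, zero_smul, exp_zero,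
    one_apply_eq_self]

theorem hasDerivAt_exp_smul_const_comp {B : E →L[ℝ] E} {φ : ℝ → ℝ} {φ' t : ℝ}
    (hφ : HasDerivAt φ φ' t) :
    HasDerivAt (fun u => exp (φ u • B)) (φ' • (B * exp (φ t • B))) t :=
  (hasDerivAt_exp_smul_const' B (φ t)).scomp t hφ

theorem continuous_exp_smul_apply (B : E →L[ℝ] E) (x : E) :
    Continuous fun u : ℝ => exp (u • B) x :=
  continuous_iff_continuousAt.2 fun u =>
    ((hasDerivAt_exp_smul_const' B u).clm_apply (hasDerivAt_const u x)).continuousAt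

theorem eq_exp_smul_apply_of_hasDerivWithinAt {B : E →L[ℝ] E} {v : ℝ → E} {a b : ℝ}
    (hv : ∀ t ∈ Icc a b, HasDerivWithinAt v (B (v t)) (Icc a b) t) :
    ∀ t ∈ Icc a b, v t = exp ((t - a) • B) (v a) := by
  set g : ℝ → E := fun t => exp (-(t - a) • B) (v t)
  have hg : ∀ t ∈ Icc a b, HasDerivWithinAt g 0 (Icc a b) t := by
    intro t ht
    have hS : HasDerivAt (fun u => exp (-(u - a) • B)) _ t :=
      hasDerivAt_exp_smul_const_comp ((hasDerivAt_id' t).sub_const a).neg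
    convert hS.hasDerivWithinAt.clm_apply (hv t ht) using 1
    rw [((Commute.refl B).smul_right _).exp_right.eq, neg_one_smul, neg_apply,
      mul_apply_eq_comp, neg_add_cancel]
  have hg_const := norm_image_sub_le_of_norm_deriv_le_segment' hg (fun _ _ => norm_zero.le)
  intro t ht
  have hgt : g t = v a := by
    simpa [g, sub_eq_zero] using hg_const t ht
  rw [← hgt, exp_smul_apply_exp_neg_smul_apply]

theorem hasDerivAt_intervalIntegral_smul_exp_smul_apply {B : E →L[ℝ] E} {R : ℝ → ℝ} {T t : ℝ}
    (x : E) (hR : ContinuousOn R (Icc 0 T)) (ht : t ∈ Ioo 0 T) :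
    HasDerivAt (fun u => ∫ τ in 0..u, R (u - τ) • exp (τ • B) x)
      (B (∫ τ in 0..t, R (t - τ) • exp (τ • B) x) + R t • x) t := by
  set φ : ℝ → E := fun σ => R σ • exp (-σ • B) x
  have hφ : ContinuousOn φ (Icc 0 T) :=
    hR.smul ((continuous_exp_smul_apply B x).comp continuous_neg).continuousOn
  have hφ_int : ∀ u ∈ Icc 0 T, IntervalIntegrable φ volume 0 u := fun u hu =>
    (hφ.mono (by rw [uIcc_of_le hu.1]; exact Icc_subset_Icc_right hu.2)).intervalIntegrable
  have hconv : ∀ u ∈ Icc 0 T,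
      ∫ τ in 0..u, R (u - τ) • exp (τ • B) x = exp (u • B) (∫ σ in 0..u, φ σ) := by
    intro u hu
    calc ∫ τ in 0..u, R (u - τ) • exp (τ • B) x
        = ∫ σ in 0..u, R σ • exp ((u - σ) • B) x := by
          simpa using intervalIntegral.integral_comp_sub_left
            (a := 0) (b := u) (fun σ => R σ • exp ((u - σ) • B) x) u
      _ = ∫ σ in 0..u, exp (u • B) (φ σ) := by
          simp only [φ, map_smul, ← mul_apply_eq_comp, exp_smul_mul_exp_smul, ← sub_eq_add_neg]
      _ = exp (u • B) (∫ σ in 0..u, φ σ) :=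
          (exp (u • B)).intervalIntegral_comp_comm (hφ_int u hu)
  have hΦ : HasDerivAt (fun u => ∫ σ in 0..u, φ σ) (φ t) t :=
    intervalIntegral.integral_hasDerivAt_right (hφ_int t (Ioo_subset_Icc_self ht))
      ((hφ.mono Ioo_subset_Icc_self).stronglyMeasurableAtFilter isOpen_Ioo t ht)
      (hφ.continuousAt (Icc_mem_nhds ht.1 ht.2))
  have hy := (hasDerivAt_exp_smul_const' B t).clm_apply hΦ
  rw [hconv t (Ioo_subset_Icc_self ht)]
  convert hy.congr_of_eventuallyEq (eventually_of_mem (isOpen_Ioo.mem_nhds ht)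
    fun u hu => hconv u (Ioo_subset_Icc_self hu)) using 1
  rw [mul_apply_eq_comp, map_smul, exp_smul_apply_exp_neg_smul_apply]

end ExpSmul

theorem eq_I_smul_of_I_smul_add_eq_zero {E : Type*} [AddCommGroup E] [Module ℂ E] {x y : E}
    (h : Complex.I • x + y = 0) : x = Complex.I • y := by
  linear_combination (norm := match_scalars) (-Complex.I) • h <;> simp

theorem stmt_16_general {E : Type*} [NormedAddCommGroup E] [NormedSpace ℂ E] [CompleteSpace E]
    (A : E →L[ℂ] E) (T : ℝ) (R R' : ℝ → ℝ) (f : E) (v v' : ℝ → E)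
    (hR : ∀ t ∈ Set.Icc (0 : ℝ) T, HasDerivWithinAt R (R' t) (Set.Icc 0 T) t)
    (hv : ∀ t ∈ Set.Icc (0 : ℝ) T, HasDerivWithinAt v (v' t) (Set.Icc 0 T) t)
    (hSch : ∀ t ∈ Set.Icc (0 : ℝ) T, Complex.I • v' t + A (v t) = 0)
    (hv0 : v 0 = (-Complex.I) • f) :
    (∫ τ in (0 : ℝ)..(0 : ℝ), R (0 - τ) • v τ) = 0 ∧
    ∀ t ∈ Set.Ioo (0 : ℝ) T, ∃ y' : E,
      HasDerivAt (fun t => ∫ τ in (0 : ℝ)..t, R (t - τ) • v τ) y' t ∧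
      Complex.I • y' + A (∫ τ in (0 : ℝ)..t, R (t - τ) • v τ) = R t • f := by
  refine ⟨intervalIntegral.integral_same, fun t ht => ?_⟩
  set B : E →L[ℝ] E := (Complex.I • A).restrictScalars ℝ
  have hB : ∀ x, B x = Complex.I • A x := fun _ => rfl
  have hvB : ∀ τ ∈ Icc 0 T, HasDerivWithinAt v (B (v τ)) (Icc 0 T) τ := fun τ hτ => by
    simpa only [hB, ← eq_I_smul_of_I_smul_add_eq_zero (hSch τ hτ)] using hv τ hτ
  have hy : ∀ u ∈ Icc 0 T,
      ∫ τ in 0..u, R (u - τ) • v τ = ∫ τ in 0..u, R (u - τ) • exp (τ • B) (v 0) := by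
    intro u hu
    refine intervalIntegral.integral_congr fun τ hτ => ?_
    rw [uIcc_of_le hu.1] at hτ
    rw [eq_exp_smul_apply_of_hasDerivWithinAt hvB τ ⟨hτ.1, hτ.2.trans hu.2⟩, sub_zero]
  have hy' := hasDerivAt_intervalIntegral_smul_exp_smul_apply (B := B) (v 0)
    (fun x hx => (hR x hx).continuousWithinAt) ht
  refine ⟨_, hy'.congr_of_eventuallyEq (eventually_of_mem (isOpen_Ioo.mem_nhds ht)
    fun u hu => hy u (Ioo_subset_Icc_self hu)), ?_⟩
  rw [hy t (Ioo_subset_Icc_self ht), hB, hv0]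
  linear_combination (norm := match_scalars)
  <;> ring_nf <;> simp [Complex.I_sq]

/-- Duhamel-type identity: if `i v' + A v = 0` on `[0,T]` with `v 0 = -i • f`, then
`y t = ∫₀ᵗ R (t - τ) • v τ dτ` satisfies `y 0 = 0` and `i y' + A y = R t • f` on `(0,T)`. -/
theorem stmt_16 {E : Type*} [NormedAddCommGroup E] [NormedSpace ℂ E] [CompleteSpace E]
    (A : E →L[ℂ] E) (T : ℝ) (hT : 0 < T) (R R' : ℝ → ℝ) (f : E) (v v' : ℝ → E)
    (hR : ∀ t ∈ Set.Icc (0 : ℝ) T, HasDerivWithinAt R (R' t) (Set.Icc 0 T) t)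
    (hR' : ContinuousOn R' (Set.Icc 0 T))
    (hv : ∀ t ∈ Set.Icc (0 : ℝ) T, HasDerivWithinAt v (v' t) (Set.Icc 0 T) t)
    (hv' : ContinuousOn v' (Set.Icc 0 T))
    (hSch : ∀ t ∈ Set.Icc (0 : ℝ) T, Complex.I • v' t + A (v t) = 0)
    (hv0 : v 0 = (-Complex.I) • f) :
    (∫ τ in (0 : ℝ)..(0 : ℝ), R (0 - τ) • v τ) = 0 ∧
    ∀ t ∈ Set.Ioo (0 : ℝ) T, ∃ y' : E,
      HasDerivAt (fun t => ∫ τ in (0 : ℝ)..t, R (t - τ) • v τ) y' t ∧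
      Complex.I • y' + A (∫ τ in (0 : ℝ)..t, R (t - τ) • v τ) = R t • f :=
  stmt_16_general A T R R' f v v' hR hv hSch hv0
end

section
/- Let E be a complex Banach space, A : E → E a continuous linear map, T > 0, and u : [0,T] → E continuously differentiable with i u′(τ) + A u(τ) = 0 for all τ ∈ [0,T]. Let K ∈ C²([−1,1]×[0,T]; ℂ) satisfy i ∂_τ K(t,τ) = ∂ₜ² K(t,τ) for all (t,τ) and K(t,0) = K(t,T) = 0 for all t ∈ [−1,1]. Then the function w(t) := ∫₀ᵀ K(t,τ) u(τ) dτ is twice continuously differentiable on (−1,1) and satisfies −w″(t) + A w(t) = 0 for every t ∈ (−1,1). -/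
/-!
Differentiating under the integral sign twice gives `w'' t = ∫₀ᵀ ∂ₜ²K(t,τ) u(τ) dτ`. By the kernel
equation this is `∫₀ᵀ i ∂_τK(t,τ) u(τ) dτ`; integrating by parts, the boundary terms vanish because
`K(t,0) = K(t,T) = 0`, leaving `-∫₀ᵀ K(t,τ) (i u'(τ)) dτ = ∫₀ᵀ K(t,τ) A u(τ) dτ = A w(t)`.
-/

open MeasureTheory Set intervalIntegral
open scoped Interval

theorem hasDerivAt_intervalIntegral_of_continuousOn {E : Type*} [NormedAddCommGroup E]
    [NormedSpace ℝ E] {F F' : ℝ → ℝ → E} {a b c d t₀ : ℝ}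
    (hF : ContinuousOn (Function.uncurry F) (Icc a b ×ˢ [[c, d]]))
    (hF' : ContinuousOn (Function.uncurry F') (Icc a b ×ˢ [[c, d]]))
    (hderiv : ∀ t ∈ Ioo a b, ∀ τ ∈ [[c, d]], HasDerivAt (F · τ) (F' t τ) t)
    (ht₀ : t₀ ∈ Ioo a b) :
    HasDerivAt (fun t => ∫ τ in c..d, F t τ) (∫ τ in c..d, F' t₀ τ) t₀ := by
  obtain ⟨C, hC⟩ := (isCompact_Icc.prod isCompact_uIcc).exists_bound_of_continuousOn hF'
  have hmeas : ∀ {G : ℝ → ℝ → E}, ContinuousOn (Function.uncurry G) (Icc a b ×ˢ [[c, d]]) →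
      ∀ t ∈ Ioo a b, AEStronglyMeasurable (G t) (volume.restrict (Ι c d)) := fun hG t ht =>
    ((hG.uncurry_left t (Ioo_subset_Icc_self ht)).mono uIoc_subset_uIcc).aestronglyMeasurable
      measurableSet_uIoc
  refine (hasDerivAt_integral_of_dominated_loc_of_deriv_le (bound := fun _ => C)
    (isOpen_Ioo.mem_nhds ht₀) ?_ ?_ (hmeas hF' t₀ ht₀) ?_ intervalIntegrable_const ?_).2
  · filter_upwards [isOpen_Ioo.mem_nhds ht₀] with t ht using hmeas hF t ht
  · exact (hF.uncurry_left t₀ (Ioo_subset_Icc_self ht₀)).intervalIntegrable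
  · exact .of_forall fun τ hτ t ht =>
      hC (t, τ) ⟨Ioo_subset_Icc_self ht, uIoc_subset_uIcc hτ⟩
  · exact .of_forall fun τ hτ t ht => hderiv t ht τ (uIoc_subset_uIcc hτ)

section

variable {E : Type*} [NormedAddCommGroup E] [NormedSpace ℂ E]

theorem hasDerivAt_intervalIntegral_smul {G G' : ℝ → ℝ → ℂ} {v : ℝ → E} {a b c d t₀ : ℝ}
    (hv : ContinuousOn v [[c, d]])
    (hG : ContinuousOn (Function.uncurry G) (Icc a b ×ˢ [[c, d]]))
    (hG' : ContinuousOn (Function.uncurry G') (Icc a b ×ˢ [[c, d]]))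
    (hderiv : ∀ t ∈ Icc a b, ∀ τ ∈ [[c, d]], HasDerivWithinAt (G · τ) (G' t τ) (Icc a b) t)
    (ht₀ : t₀ ∈ Ioo a b) :
    HasDerivAt (fun t => ∫ τ in c..d, G t τ • v τ) (∫ τ in c..d, G' t₀ τ • v τ) t₀ := by
  have hv' : ContinuousOn (fun p : ℝ × ℝ => v p.2) (Icc a b ×ˢ [[c, d]]) :=
    hv.comp continuousOn_snd fun _ hp => hp.2
  refine hasDerivAt_intervalIntegral_of_continuousOn (F := fun t τ => G t τ • v τ)
    (F' := fun t τ => G' t τ • v τ) (hG.smul hv') (hG'.smul hv') ?_ ht₀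
  intro t ht τ hτ
  exact ((hderiv t (Ioo_subset_Icc_self ht) τ hτ).hasDerivAt
    (Icc_mem_nhds ht.1 ht.2)).smul_const (v τ)

theorem integral_I_mul_deriv_smul_eq_apply_integral_smul [CompleteSpace E] (A : E →L[ℂ] E)
    {k k' : ℝ → ℂ} {u u' : ℝ → E} {a b : ℝ} (hk : ∀ τ ∈ [[a, b]], HasDerivWithinAt k (k' τ) [[a, b]] τ)
    (hk' : ContinuousOn k' [[a, b]])
    (hu : ∀ τ ∈ [[a, b]], HasDerivWithinAt u (u' τ) [[a, b]] τ)
    (hu' : ContinuousOn u' [[a, b]])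
    (hSch : ∀ τ ∈ [[a, b]], Complex.I • u' τ + A (u τ) = 0) (ha : k a = 0) (hb : k b = 0) :
    ∫ τ in a..b, (Complex.I * k' τ) • u τ = A (∫ τ in a..b, k τ • u τ) := by
  have hkc : ContinuousOn k [[a, b]] := fun τ hτ => (hk τ hτ).continuousWithinAt
  have huc : ContinuousOn u [[a, b]] := fun τ hτ => (hu τ hτ).continuousWithinAt
  have hparts : ∫ τ in a..b, k' τ • u τ = -∫ τ in a..b, k τ • u' τ := by
    rw [integral_smul_deriv_eq_deriv_smul_of_hasDerivWithinAt hk hu hk'.intervalIntegrable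
      hu'.intervalIntegrable, ha, hb]
    simp
  calc ∫ τ in a..b, (Complex.I * k' τ) • u τ
      = Complex.I • ∫ τ in a..b, k' τ • u τ := by
        simp only [mul_smul, intervalIntegral.integral_smul]
    _ = -∫ τ in a..b, k τ • (Complex.I • u' τ) := by
        simp only [hparts, smul_comm _ Complex.I, intervalIntegral.integral_smul, smul_neg]
    _ = ∫ τ in a..b, k τ • A (u τ) := by
        rw [← intervalIntegral.integral_neg]
        refine integral_congr fun τ hτ => ?_
        simp only [eq_neg_of_add_eq_zero_left (hSch τ hτ), smul_neg, neg_neg]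
    _ = A (∫ τ in a..b, k τ • u τ) := by
        rw [← A.intervalIntegral_comp_comm (f := fun τ => k τ • u τ)
          (hkc.smul huc).intervalIntegrable]
        simp only [map_smul]

end

/-- The central transform of the paper: if `i u' + A u = 0` on `[0,T]` and `K` is C² on
`[-1,1] × [0,T]` with `i ∂_τ K = ∂ₜ² K` and `K t 0 = K t T = 0`, then
`w t = ∫₀ᵀ K t τ • u τ dτ` is twice continuously differentiable on `(-1,1)` and satisfies
`-w'' + A w = 0` there. -/
theorem stmt_17 {E : Type*} [NormedAddCommGroup E] [NormedSpace ℂ E] [CompleteSpace E]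
    (A : E →L[ℂ] E) (T : ℝ) (hT : 0 < T) (u u' : ℝ → E) (K Ktau Kt Ktt : ℝ → ℝ → ℂ)
    (hu : ∀ τ ∈ Set.Icc (0 : ℝ) T, HasDerivWithinAt u (u' τ) (Set.Icc 0 T) τ)
    (hu' : ContinuousOn u' (Set.Icc 0 T))
    (hSch : ∀ τ ∈ Set.Icc (0 : ℝ) T, Complex.I • u' τ + A (u τ) = 0)
    (hKtau : ∀ t ∈ Set.Icc (-1 : ℝ) 1, ∀ τ ∈ Set.Icc (0 : ℝ) T,
      HasDerivWithinAt (fun σ => K t σ) (Ktau t τ) (Set.Icc 0 T) τ)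
    (hKt : ∀ t ∈ Set.Icc (-1 : ℝ) 1, ∀ τ ∈ Set.Icc (0 : ℝ) T,
      HasDerivWithinAt (fun s => K s τ) (Kt t τ) (Set.Icc (-1) 1) t)
    (hKtt : ∀ t ∈ Set.Icc (-1 : ℝ) 1, ∀ τ ∈ Set.Icc (0 : ℝ) T,
      HasDerivWithinAt (fun s => Kt s τ) (Ktt t τ) (Set.Icc (-1) 1) t)
    (hKcont : ContinuousOn (Function.uncurry K) (Set.Icc (-1 : ℝ) 1 ×ˢ Set.Icc (0 : ℝ) T))
    (hKtaucont : ContinuousOn (Function.uncurry Ktau)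
      (Set.Icc (-1 : ℝ) 1 ×ˢ Set.Icc (0 : ℝ) T))
    (hKtcont : ContinuousOn (Function.uncurry Kt)
      (Set.Icc (-1 : ℝ) 1 ×ˢ Set.Icc (0 : ℝ) T))
    (hKttcont : ContinuousOn (Function.uncurry Ktt)
      (Set.Icc (-1 : ℝ) 1 ×ˢ Set.Icc (0 : ℝ) T))
    (hPDE : ∀ t ∈ Set.Icc (-1 : ℝ) 1, ∀ τ ∈ Set.Icc (0 : ℝ) T,
      Complex.I * Ktau t τ = Ktt t τ)
    (hK0 : ∀ t ∈ Set.Icc (-1 : ℝ) 1, K t 0 = 0)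
    (hKT : ∀ t ∈ Set.Icc (-1 : ℝ) 1, K t T = 0) :
    ∃ w' w'' : ℝ → E,
      (∀ t ∈ Set.Ioo (-1 : ℝ) 1,
        HasDerivAt (fun t => ∫ τ in (0 : ℝ)..T, K t τ • u τ) (w' t) t) ∧
      (∀ t ∈ Set.Ioo (-1 : ℝ) 1, HasDerivAt w' (w'' t) t) ∧
      ContinuousOn w'' (Set.Ioo (-1 : ℝ) 1) ∧
      (∀ t ∈ Set.Ioo (-1 : ℝ) 1,
        -(w'' t) + A (∫ τ in (0 : ℝ)..T, K t τ • u τ) = 0) := by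
  rw [← uIcc_of_le hT.le] at hu hu' hSch hKtau hKt hKtt hKcont hKtaucont hKtcont hKttcont hPDE
  have hucont : ContinuousOn u [[0, T]] := fun τ hτ => (hu τ hτ).continuousWithinAt
  have hw' (t : ℝ) (ht : t ∈ Ioo (-1 : ℝ) 1) :=
    hasDerivAt_intervalIntegral_smul hucont hKcont hKtcont hKt ht
  refine ⟨fun t => ∫ τ in 0..T, Kt t τ • u τ, fun t => A (∫ τ in 0..T, K t τ • u τ),
    hw', fun t ht => ?_, ?_, fun _ _ => neg_add_cancel _⟩
  · have ht' : t ∈ Icc (-1 : ℝ) 1 := Ioo_subset_Icc_self ht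
    have hw'' : ∫ τ in 0..T, Ktt t τ • u τ = A (∫ τ in 0..T, K t τ • u τ) := by
      rw [← integral_I_mul_deriv_smul_eq_apply_integral_smul A (hKtau t ht')
        (hKtaucont.uncurry_left t ht') hu hu' hSch (hK0 t ht') (hKT t ht')]
      exact integral_congr fun τ hτ => by rw [hPDE t ht' τ hτ]
    have hderiv := hasDerivAt_intervalIntegral_smul hucont hKtcont hKttcont hKtt ht
    rwa [hw''] at hderiv
  · exact A.continuous.comp_continuousOn fun t ht => (hw' t ht).continuousAt.continuousWithinAt
end
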